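/- In the block construction, if additionally m · 2^{−s} ≤ 1/4, then m · 2^{(m−1)s} ≤ |F| ≤ 2m · 2^{(m−1)s}. -/

import Mathlib

open Finset

/-- A family of finite sets is union-closed if it contains the union of any two of
its members. -/
def UnionClosed {α : Type*} [DecidableEq α] (F : Finset (Finset α)) : Prop :=
  ∀ A ∈ F, ∀ B ∈ F, A ∪ B ∈ F

/-- The abundance of `x` with respect to a family `F`. -/
noncomputable def abundance {α : Type*} [DecidableEq α] (F : Finset (Finset α)) (x : α) : ℝ :=
  ((F.filter (fun A => x ∈ A)).card : ℝ) / (F.card : ℝ)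

/-- The average overlap density of `F`. -/
noncomputable def AOD {α : Type*} [DecidableEq α] (F : Finset (Finset α)) : ℝ :=
  (1 / (((F.erase ∅).card : ℝ))) *
    ∑ A ∈ F.erase ∅, (1 / (A.card : ℝ)) * ∑ x ∈ A, abundance F x

/-- The union-closed family generated by `G = {B i ∪ {j} : i, j ∈ T}`:
all unions of nonempty subcollections of `G`. -/
def blockFamily {n m : ℕ} (B : Fin m → Finset (Fin n)) (T : Finset (Fin n)) :
    Finset (Finset (Fin n)) :=
  ((((univ : Finset (Fin m)) ×ˢ T).image (fun p => B p.1 ∪ {p.2})).powerset.filter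
      (fun C => C.Nonempty)).image (fun C => C.sup id)

/-! Every member of the family is `B_I ∪ S` for a unique pair with `I ≠ ∅` and
`S ⊆ ⋃_{j ∉ I} T_j`: the index set `I` is recovered as the set of blocks contained in the member,
since no block fits inside its own `T_i`. Hence
`|F| = Σ_{I ≠ ∅} 2^{s(m - |I|)} = (2^s + 1)^m - 2^{ms}`, and both bounds compare `(2^s + 1)^m`
with the first two terms of its binomial expansion. -/

open Function

lemma mem_blockFamily_iff_exists_pairs {n m : ℕ} {B : Fin m → Finset (Fin n)}
    {T C : Finset (Fin n)} :
    C ∈ blockFamily B T ↔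
      ∃ P ⊆ (univ : Finset (Fin m)) ×ˢ T, P.Nonempty ∧ P.sup (fun p => B p.1 ∪ {p.2}) = C := by
  simp only [blockFamily, mem_image, mem_filter, mem_powerset, and_assoc, subset_image_iff]
  constructor
  · rintro ⟨_, ⟨P, hP, rfl⟩, hne, rfl⟩
    exact ⟨P, hP, image_nonempty.1 hne, (sup_image P _ id).symm⟩
  · rintro ⟨P, hP, hne, rfl⟩
    exact ⟨_, ⟨P, hP, rfl⟩, hne.image _, sup_image P _ id⟩

lemma mem_blockFamily_iff {n m : ℕ} {B : Fin m → Finset (Fin n)} {T C : Finset (Fin n)}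
    (hTB : ∀ i, (T ∩ B i).Nonempty) :
    C ∈ blockFamily B T ↔ ∃ I : Finset (Fin m), I.Nonempty ∧ ∃ S ⊆ T, C = I.biUnion B ∪ S := by
  rw [mem_blockFamily_iff_exists_pairs]
  constructor
  · rintro ⟨P, hP, hne, rfl⟩
    refine ⟨P.image Prod.fst, hne.image _, P.image Prod.snd, fun x hx => ?_, ?_⟩
    · obtain ⟨p, hp, rfl⟩ := mem_image.1 hx
      exact (mem_product.1 (hP hp)).2
    · ext x
      simp only [mem_sup, mem_union, mem_singleton, mem_biUnion, mem_image]
      aesop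
  · rintro ⟨I, ⟨i₀, hi₀⟩, S, hS, rfl⟩
    -- `B i` comes from any generator `B i ∪ {t}` with `t ∈ T ∩ B i`, and `x ∈ S` from `B i₀ ∪ {x}`.
    refine ⟨(I ×ˢ T).filter (fun p => p.2 ∈ B p.1 ∨ p.2 ∈ S), ?_, ?_, ?_⟩
    · intro p hp
      exact mem_product.2 ⟨mem_univ _, (mem_product.1 (mem_filter.1 hp).1).2⟩
    · obtain ⟨t, ht⟩ := hTB i₀
      exact ⟨(i₀, t), mem_filter.2 ⟨mem_product.2 ⟨hi₀, (mem_inter.1 ht).1⟩,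
        Or.inl (mem_inter.1 ht).2⟩⟩
    · ext x
      simp only [mem_sup, mem_filter, mem_product, mem_union, mem_singleton, mem_biUnion]
      constructor
      · rintro ⟨⟨i, t⟩, ⟨⟨hi, -⟩, htB⟩, hxi | rfl⟩
        · exact Or.inl ⟨i, hi, hxi⟩
        · exact htB.imp (fun htB => ⟨i, hi, htB⟩) id
      · rintro (⟨i, hi, hxi⟩ | hxS)
        · obtain ⟨t, ht⟩ := hTB i
          exact ⟨(i, t), ⟨⟨hi, (mem_inter.1 ht).1⟩, Or.inl (mem_inter.1 ht).2⟩, Or.inl hxi⟩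
        · exact ⟨(i₀, x), ⟨⟨hi₀, hS hxS⟩, Or.inr hxS⟩, Or.inr rfl⟩

section Blocks

variable {ι α : Type*} [DecidableEq α] {B T : ι → Finset α}

lemma inter_biUnion_subset (hB : Pairwise (Disjoint on B)) (hTB : ∀ i, T i ⊆ B i) (i : ι)
    (J : Finset ι) : B i ∩ J.biUnion T ⊆ T i := by
  intro x hx
  obtain ⟨hxB, hxJ⟩ := mem_inter.1 hx
  obtain ⟨j, -, hxj⟩ := mem_biUnion.1 hxJ
  obtain rfl : i = j := hB.eq (not_disjoint_iff.2 ⟨x, hxB, hTB j hxj⟩)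
  exact hxj

variable [Fintype ι] [DecidableEq ι]

def blockPairs (T : ι → Finset α) : Finset (Σ _ : Finset ι, Finset α) :=
  (univ.erase ∅).sigma fun I => (Iᶜ.biUnion T).powerset

lemma mem_blockPairs {p : Σ _ : Finset ι, Finset α} :
    p ∈ blockPairs T ↔ p.1 ≠ ∅ ∧ p.2 ⊆ p.1ᶜ.biUnion T := by
  simp [blockPairs]

lemma disjoint_biUnion_compl_biUnion (hB : Pairwise (Disjoint on B)) (hTB : ∀ i, T i ⊆ B i)
    (I : Finset ι) : Disjoint (I.biUnion B) (Iᶜ.biUnion T) := by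
  rw [disjoint_biUnion_left]
  intro i hi
  rw [disjoint_biUnion_right]
  intro j hj
  exact (hB (ne_of_mem_of_not_mem hi (mem_compl.1 hj))).mono_right (hTB j)

lemma filter_subset_biUnion_union_eq (hB : Pairwise (Disjoint on B)) (hTB : ∀ i, T i ⊂ B i)
    {I : Finset ι} {S : Finset α} (hS : S ⊆ Iᶜ.biUnion T) :
    univ.filter (fun i => B i ⊆ I.biUnion B ∪ S) = I := by
  ext i
  simp only [mem_filter, mem_univ, true_and]
  refine ⟨fun hi => ?_, fun hi => (subset_biUnion_of_mem B hi).trans subset_union_left⟩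
  by_contra hiI
  have hdisj : Disjoint (B i) (I.biUnion B) := by
    rw [disjoint_biUnion_right]
    exact fun j hj => hB (ne_of_mem_of_not_mem hj hiI).symm
  have hBS : B i ⊆ S := hdisj.left_le_of_le_sup_left hi
  exact (hTB i).not_subset fun x hx =>
    inter_biUnion_subset hB (fun j => (hTB j).subset) i Iᶜ (mem_inter.2 ⟨hx, hS (hBS hx)⟩)

lemma injOn_blockPairs (hB : Pairwise (Disjoint on B)) (hTB : ∀ i, T i ⊂ B i) :
    Set.InjOn (fun p => p.1.biUnion B ∪ p.2) (blockPairs T : Set (Σ _ : Finset ι, Finset α)) := by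
  rintro ⟨I, S⟩ hp ⟨I', S'⟩ hp' h
  have hS := (mem_blockPairs.1 hp).2
  have hS' := (mem_blockPairs.1 hp').2
  simp only at h hS hS'
  obtain rfl : I = I' := by
    rw [← filter_subset_biUnion_union_eq hB hTB hS, h, filter_subset_biUnion_union_eq hB hTB hS']
  have hdisj := disjoint_biUnion_compl_biUnion hB (fun i => (hTB i).subset) I
  rw [← union_sdiff_cancel_left (hdisj.mono_right hS),
    ← union_sdiff_cancel_left (hdisj.mono_right hS'), h]

lemma card_blockPairs_add {s : ℕ} (hT : Pairwise (Disjoint on T)) (hTcard : ∀ i, (T i).card = s) :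
    (blockPairs T).card + (2 ^ s) ^ Fintype.card ι = (2 ^ s + 1) ^ Fintype.card ι := by
  have hterm : ∀ I : Finset ι,
      ((Iᶜ.biUnion T).powerset).card = 1 ^ I.card * (2 ^ s) ^ (Fintype.card ι - I.card) := by
    intro I
    rw [card_powerset, card_biUnion (fun i _ j _ hij => hT hij), sum_congr rfl fun i _ => hTcard i,
      sum_const, smul_eq_mul, card_compl, one_pow, one_mul, pow_mul']
  rw [blockPairs, card_sigma, add_comm (2 ^ s), ← Fintype.sum_pow_mul_eq_add_pow,
    ← sum_erase_add _ _ (mem_univ ∅), sum_congr rfl fun I _ => hterm I]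
  simp

end Blocks

lemma blockFamily_eq_image {m n : ℕ} {B T : Fin m → Finset (Fin n)}
    (hTB : ∀ i, T i ⊆ B i) (hT : ∀ i, (T i).Nonempty) :
    blockFamily B (univ.biUnion T) = (blockPairs T).image (fun p => p.1.biUnion B ∪ p.2) := by
  ext C
  rw [mem_blockFamily_iff fun i =>
    (hT i).mono (subset_inter (subset_biUnion_of_mem T (mem_univ i)) (hTB i)), mem_image]
  constructor
  · rintro ⟨I, hI, S, hS, rfl⟩
    refine ⟨⟨I, S \ I.biUnion B⟩, mem_blockPairs.2 ⟨hI.ne_empty, ?_⟩, union_sdiff_self_eq_union⟩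
    intro x hx
    obtain ⟨hxS, hxI⟩ := mem_sdiff.1 hx
    obtain ⟨j, -, hxj⟩ := mem_biUnion.1 (hS hxS)
    exact mem_biUnion.2 ⟨j, mem_compl.2 fun hj => hxI (mem_biUnion.2 ⟨j, hj, hTB j hxj⟩), hxj⟩
  · rintro ⟨⟨I, S⟩, hp, rfl⟩
    obtain ⟨hI, hS⟩ := mem_blockPairs.1 hp
    exact ⟨I, nonempty_iff_ne_empty.2 hI, S,
      hS.trans (biUnion_subset_biUnion_of_subset_left _ (subset_univ _)), rfl⟩

lemma card_blockFamily_add {m n s : ℕ} {B T : Fin m → Finset (Fin n)}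
    (hB : Pairwise (Disjoint on B)) (hTB : ∀ i, T i ⊂ B i) (hTcard : ∀ i, (T i).card = s)
    (hs : 0 < s) :
    (blockFamily B (univ.biUnion T)).card + (2 ^ s) ^ m = (2 ^ s + 1) ^ m := by
  have hT i : (T i).Nonempty := card_pos.1 (hTcard i ▸ hs)
  rw [blockFamily_eq_image (fun i => (hTB i).subset) hT,
    card_image_of_injOn (injOn_blockPairs hB hTB)]
  simpa using
    card_blockPairs_add (fun i j hij => (hB hij).mono (hTB i).subset (hTB j).subset) hTcard

lemma pow_add_mul_pow_le_add_one_pow (a m : ℕ) :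
    a ^ (m + 1) + (m + 1) * a ^ m ≤ (a + 1) ^ (m + 1) := by
  induction m with
  | zero => simp
  | succ m ih =>
    calc a ^ (m + 2) + (m + 2) * a ^ (m + 1)
        ≤ (a ^ (m + 1) + (m + 1) * a ^ m) * (a + 1) := by ring_nf; nlinarith [Nat.zero_le (a ^ m)]
      _ ≤ (a + 1) ^ (m + 2) := by rw [pow_succ (a + 1) (m + 1)]; gcongr

lemma add_one_pow_le_pow_add_mul_pow {a m : ℕ} (h : 2 * m ≤ a) :
    (a + 1) ^ (m + 1) ≤ a ^ (m + 1) + 2 * (m + 1) * a ^ m := by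
  induction m with
  | zero => simp
  | succ m ih =>
    calc (a + 1) ^ (m + 2) = (a + 1) ^ (m + 1) * (a + 1) := pow_succ _ _
      _ ≤ (a ^ (m + 1) + 2 * (m + 1) * a ^ m) * (a + 1) := by gcongr; exact ih (by omega)
      _ ≤ a ^ (m + 2) + 2 * (m + 2) * a ^ (m + 1) := by
        have : 2 * (m + 1) * a ^ m ≤ a ^ (m + 1) := by
          rw [pow_succ']; exact Nat.mul_le_mul_right _ h
        ring_nf; ring_nf at this; nlinarith

theorem blockFamily_card_bounds_general
    (k m s : ℕ) (hm : 2 ≤ m) (hs : 0 < s) (hsk : s + 2 ≤ k)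
    (B : Fin m → Finset (Fin (k * m)))
    (hBcard : ∀ i, (B i).card = k)
    (hBdisj : ∀ i j : Fin m, i ≠ j → Disjoint (B i) (B j))
    (T : Fin m → Finset (Fin (k * m)))
    (hT : ∀ i, T i ⊆ B i) (hTcard : ∀ i, (T i).card = s)
    (hτ : (m : ℝ) * (2 : ℝ) ^ (-(s : ℤ)) ≤ 1 / 4) :
    m * 2 ^ ((m - 1) * s) ≤ (blockFamily B ((univ : Finset (Fin m)).biUnion T)).card ∧
    (blockFamily B ((univ : Finset (Fin m)).biUnion T)).card ≤ 2 * m * 2 ^ ((m - 1) * s) := by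
  have hTB i : T i ⊂ B i :=
    (hT i).ssubset_of_ne (ne_of_apply_ne card (by rw [hTcard, hBcard]; omega))
  have hcard := card_blockFamily_add (fun i j hij => hBdisj i j hij) hTB hTcard hs
  have h4m : 4 * m ≤ 2 ^ s := by
    rw [zpow_neg, zpow_natCast, ← div_eq_mul_inv, div_le_iff₀ (by positivity)] at hτ
    exact_mod_cast (by push_cast; linarith : ((4 * m : ℕ) : ℝ) ≤ 2 ^ s)
  obtain ⟨m, rfl⟩ : ∃ m', m = m' + 1 := ⟨m - 1, by omega⟩
  rw [Nat.add_sub_cancel, pow_mul']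
  have hlow := pow_add_mul_pow_le_add_one_pow (2 ^ s) m
  have hup := add_one_pow_le_pow_add_mul_pow (a := 2 ^ s) (m := m) (by omega)
  constructor <;> linarith

/-- In the block construction, if `m · 2^{−s} ≤ 1/4`, then
`m · 2^{(m−1)s} ≤ |F| ≤ 2m · 2^{(m−1)s}`. -/
theorem blockFamily_card_bounds
    (k m s : ℕ) (hk : 0 < k) (hm : 2 ≤ m) (hs : 0 < s) (hsk : s + 2 ≤ k)
    (B : Fin m → Finset (Fin (k * m)))
    (hBcard : ∀ i, (B i).card = k)
    (hBdisj : ∀ i j : Fin m, i ≠ j → Disjoint (B i) (B j))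
    (hBcover : (Finset.univ : Finset (Fin m)).biUnion B = (Finset.univ : Finset (Fin (k * m))))
    (T : Fin m → Finset (Fin (k * m)))
    (hT : ∀ i, T i ⊆ B i) (hTcard : ∀ i, (T i).card = s)
    (hτ : (m : ℝ) * (2 : ℝ) ^ (-(s : ℤ)) ≤ 1 / 4) :
    m * 2 ^ ((m - 1) * s) ≤ (blockFamily B ((univ : Finset (Fin m)).biUnion T)).card ∧
    (blockFamily B ((univ : Finset (Fin m)).biUnion T)).card ≤ 2 * m * 2 ^ ((m - 1) * s) :=
  blockFamily_card_bounds_general k m s hm hs hsk B hBcard hBdisj T hT hTcard hτ
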